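/- arXiv:1410.0785 — 4 statements merged into one kernel-verified Lean document; each statement's English description precedes it below -/
import Mathlib

section
/- Suppose a BVP fundamental solution Φ exists for A(t), B₀, B₁ on [0,1], and let G(t,s) = Φ(t)B₀Φ(0)Φ(s)⁻¹ for s ≤ t and G(t,s) = -Φ(t)B₁Φ(1)Φ(s)⁻¹ for s > t. Then for any continuous r : [0,1] → ℝⁿ with r(0) = 0 and any w ∈ ℝⁿ, the function v(t) = Φ(t)(w - B₁ r(1)) + r(t) + ∫₀¹ G(t,s)A(s)r(s) ds satisfies v(t) - v(0) - ∫₀ᵗ A(s)v(s) ds = r(t) for all t ∈ [0,1] and B₀ v(0) + B₁ v(1) = w. -/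
/-!
Put `ρ = Φ⁻¹ A r` and `R τ = ∫₀^τ ρ`. Splitting the Green integral at `s = τ` and using
`B₀Φ(0) + B₁Φ(1) = I` gives `v τ = Φ τ (c + R τ) + r τ` with `c = w - B₁ r(1) - B₁Φ(1) R(1)`.
On each open mesh interval `(Φ (c + R))' = A Φ (c + R) + Φ ρ = A v`, so the fundamental theorem of
calculus (off the countably many mesh points) gives the integral equation, and evaluating the
same formula at `0` and `1` gives the boundary condition.
-/

open Matrix

attribute [local instance] Matrix.normedAddCommGroup Matrix.normedSpace

/-- `Φ` is a BVP fundamental solution for `Φ' = AΦ`, `B₀Φ(0) + B₁Φ(1) = I` on `[0,1]`,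
piecewise `C¹` with respect to the mesh `t 0 < t 1 < ... < t N`. -/
def IsBVPFundSol {n : ℕ} (A : ℝ → Matrix (Fin n) (Fin n) ℝ)
    (B₀ B₁ : Matrix (Fin n) (Fin n) ℝ) (N : ℕ) (t : ℕ → ℝ)
    (Φ : ℝ → Matrix (Fin n) (Fin n) ℝ) : Prop :=
  ContinuousOn Φ (Set.Icc 0 1) ∧
  (∀ j < N, ∀ s ∈ Set.Ioo (t j) (t (j+1)), HasDerivAt Φ (A s * Φ s) s) ∧
  B₀ * Φ 0 + B₁ * Φ 1 = 1 ∧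
  (∀ s ∈ Set.Icc (0:ℝ) 1, IsUnit (Φ s))

open MeasureTheory Set

section Matrix

variable {m n : Type*} [Fintype n]

theorem ContinuousOn.matrix_mulVec {X R : Type*} [TopologicalSpace X] [TopologicalSpace R]
    [NonUnitalNonAssocSemiring R] [ContinuousAdd R] [ContinuousMul R] {s : Set X}
    {A : X → Matrix m n R} {v : X → n → R} (hA : ContinuousOn A s) (hv : ContinuousOn v s) :
    ContinuousOn (fun x => A x *ᵥ v x) s :=
  (continuous_fst.matrix_mulVec continuous_snd).comp_continuousOn (hA.prodMk hv)

theorem ContinuousOn.matrix_inv [DecidableEq n] {X R : Type*} [TopologicalSpace X]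
    [NormedCommRing R] [HasSummableGeomSeries R] {s : Set X} {A : X → Matrix n n R} (hA : ContinuousOn A s) (hu : ∀ x ∈ s, IsUnit (A x)) :
    ContinuousOn (fun x => (A x)⁻¹) s := fun x hx =>
  (continuousAt_matrix_inv _ (NormedRing.inverse_continuousAt
    ((isUnit_iff_isUnit_det _).mp (hu x hx)).unit)).comp_continuousWithinAt (hA x hx)

variable [Fintype m]

theorem HasDerivAt.matrix_mulVec {𝕜 : Type*} [NontriviallyNormedField 𝕜] [CompleteSpace 𝕜]
    {A : 𝕜 → Matrix m n 𝕜} {A' : Matrix m n 𝕜} {v : 𝕜 → n → 𝕜} {v' : n → 𝕜} {x : 𝕜}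
    (hA : HasDerivAt A A' x) (hv : HasDerivAt v v' x) :
    HasDerivAt (fun y => A y *ᵥ v y) (A' *ᵥ v x + A x *ᵥ v') x := by
  let B := (mulVecBilin 𝕜 𝕜 : Matrix m n 𝕜 →ₗ[𝕜] _).toContinuousBilinearMap
  exact (B.hasFDerivAt.comp_hasDerivAt x hA).clm_apply hv

variable {𝕜 : Type*} [RCLike 𝕜] {v : ℝ → n → 𝕜} {a b : ℝ}

theorem IntervalIntegrable.const_mulVec (M : Matrix m n 𝕜)
    (hv : IntervalIntegrable v volume a b) : IntervalIntegrable (fun s => M *ᵥ v s) volume a b :=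
  ⟨(mulVecLin M).toContinuousLinearMap.integrable_comp hv.1,
    (mulVecLin M).toContinuousLinearMap.integrable_comp hv.2⟩

theorem intervalIntegral.integral_const_mulVec (M : Matrix m n 𝕜)
    (hv : IntervalIntegrable v volume a b) : ∫ s in a..b, M *ᵥ v s = M *ᵥ ∫ s in a..b, v s :=
  (mulVecLin M).toContinuousLinearMap.intervalIntegral_comp_comm hv

end Matrix

section Integral

variable {E : Type*} [NormedAddCommGroup E]

theorem IntervalIntegrable.mono_Icc {f : ℝ → E} {a b c d : ℝ}
    (hf : IntervalIntegrable f volume a b) (hc : c ∈ Icc a b) (hd : d ∈ Icc a b) :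
    IntervalIntegrable f volume c d :=
  hf.mono_set (uIcc_subset_uIcc (Icc_subset_uIcc hc) (Icc_subset_uIcc hd))

theorem intervalIntegrable_of_eqOn_Ioo {f fc : ℝ → E} {a b : ℝ} (hab : a ≤ b)
    (hfc : ContinuousOn fc (Icc a b)) (hf : EqOn f fc (Ioo a b)) :
    IntervalIntegrable f volume a b := by
  rw [intervalIntegrable_iff_integrableOn_Ioo_of_le hab]
  exact (hfc.integrableOn_Icc.mono_set Ioo_subset_Icc_self).congr_fun hf.symm measurableSet_Ioo

theorem intervalIntegral.integral_ite_le [NormedSpace ℝ E] {f g : ℝ → E} {a b τ : ℝ}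
    (hτ : τ ∈ Icc a b) (hf : IntervalIntegrable f volume a τ)
    (hg : IntervalIntegrable g volume τ b) :
    ∫ s in a..b, (if s ≤ τ then f s else g s) = (∫ s in a..τ, f s) + ∫ s in τ..b, g s := by
  have hleft : EqOn (fun s => if s ≤ τ then f s else g s) f (uIoc a τ) := fun s hs =>
    if_pos (by rw [uIoc_of_le hτ.1] at hs; exact hs.2)
  have hright : EqOn (fun s => if s ≤ τ then f s else g s) g (uIoc τ b) := fun s hs =>
    if_neg (by rw [uIoc_of_le hτ.2] at hs; exact hs.1.not_ge)
  rw [← integral_add_adjacent_intervals (b := τ) (hf.congr hleft.symm) (hg.congr hright.symm),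
    integral_congr_ae (ae_of_all _ fun _ hs => hleft hs),
    integral_congr_ae (ae_of_all _ fun _ hs => hright hs)]

end Integral

section Mesh

variable {N : ℕ} {t : ℕ → ℝ}

theorem mesh_monotoneOn (ht : ∀ j < N, t j ≤ t (j + 1)) : MonotoneOn t (Iic N) :=
  monotoneOn_of_le_add_one ordConnected_Iic fun j _ _ hj => ht j hj

theorem Icc_mesh_subset (ht : ∀ j < N, t j ≤ t (j + 1)) {j : ℕ} (hj : j < N) :
    Icc (t j) (t (j + 1)) ⊆ Icc (t 0) (t N) :=
  Icc_subset_Icc (mesh_monotoneOn ht (Nat.zero_le _) (mem_Iic.2 hj.le) (Nat.zero_le _))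
    (mesh_monotoneOn ht (mem_Iic.2 hj) (mem_Iic.2 le_rfl) hj)

theorem exists_mem_Ioo_mesh_of_notMem_range (ht : ∀ j < N, t j ≤ t (j + 1)) {x : ℝ}
    (hx : x ∈ Ioo (t 0) (t N)) (hxt : x ∉ range t) : ∃ j < N, x ∈ Ioo (t j) (t (j + 1)) := by
  induction N with
  | zero => exact absurd hx (by simp)
  | succ N ih =>
    rcases lt_or_ge x (t N) with hlt | hge
    · obtain ⟨j, hj, hxj⟩ := ih (fun j hj => ht j (by omega)) ⟨hx.1, hlt⟩
      exact ⟨j, by omega, hxj⟩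
    · exact ⟨N, N.lt_succ_self, lt_of_le_of_ne hge fun h => hxt ⟨N, h⟩, hx.2⟩

theorem integral_eq_sub_of_hasDerivAt_mesh {E : Type*} [NormedAddCommGroup E] [NormedSpace ℝ E]
    [CompleteSpace E] {g g' : ℝ → E} (ht : ∀ j < N, t j ≤ t (j + 1))
    (hg : ContinuousOn g (Icc (t 0) (t N)))
    (hderiv : ∀ j < N, ∀ s ∈ Ioo (t j) (t (j + 1)), HasDerivAt g (g' s) s)
    (hint : IntervalIntegrable g' volume (t 0) (t N)) {τ : ℝ} (hτ : τ ∈ Icc (t 0) (t N)) :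
    ∫ s in t 0..τ, g' s = g τ - g (t 0) := by
  refine integral_eq_of_hasDerivAt_off_countable_of_le g g' hτ.1 (countable_range t)
    (hg.mono (Icc_subset_Icc_right hτ.2)) (fun x ⟨hx, hxt⟩ => ?_)
    (hint.mono_Icc (left_mem_Icc.2 (hτ.1.trans hτ.2)) hτ)
  obtain ⟨j, hj, hxj⟩ :=
    exists_mem_Ioo_mesh_of_notMem_range ht ⟨hx.1, hx.2.trans_le hτ.2⟩ hxt
  exact hderiv j hj x hxj

def IsPiecewiseContinuous {E : Type*} [TopologicalSpace E] (N : ℕ) (t : ℕ → ℝ) (f : ℝ → E) :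
    Prop :=
  ∀ j < N, ∃ fc : ℝ → E, ContinuousOn fc (Icc (t j) (t (j + 1))) ∧
    EqOn f fc (Ioo (t j) (t (j + 1)))

theorem ContinuousOn.isPiecewiseContinuous {E : Type*} [TopologicalSpace E] {f : ℝ → E}
    (ht : ∀ j < N, t j ≤ t (j + 1)) (hf : ContinuousOn f (Icc (t 0) (t N))) :
    IsPiecewiseContinuous N t f :=
  fun _ hj => ⟨f, hf.mono (Icc_mesh_subset ht hj), eqOn_refl f _⟩

theorem IsPiecewiseContinuous.matrix_mulVec {m n : Type*} [Fintype m] [Fintype n]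
    {A : ℝ → Matrix m n ℝ} {v : ℝ → n → ℝ} (hA : IsPiecewiseContinuous N t A)
    (hv : IsPiecewiseContinuous N t v) : IsPiecewiseContinuous N t fun s => A s *ᵥ v s :=
  fun j hj => by
    obtain ⟨Ac, hAc, hAAc⟩ := hA j hj
    obtain ⟨vc, hvc, hvvc⟩ := hv j hj
    exact ⟨fun s => Ac s *ᵥ vc s, hAc.matrix_mulVec hvc, fun s hs => by
      simp only [hAAc hs, hvvc hs]⟩

theorem IsPiecewiseContinuous.continuousOn_Ioo {E : Type*} [TopologicalSpace E] {f : ℝ → E}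
    (hf : IsPiecewiseContinuous N t f) {j : ℕ} (hj : j < N) :
    ContinuousOn f (Ioo (t j) (t (j + 1))) := by
  obtain ⟨fc, hfc, hffc⟩ := hf j hj
  exact (hfc.mono Ioo_subset_Icc_self).congr hffc

theorem IsPiecewiseContinuous.intervalIntegrable {E : Type*} [NormedAddCommGroup E]
    {f : ℝ → E} (hf : IsPiecewiseContinuous N t f) (ht : ∀ j < N, t j ≤ t (j + 1)) :
    IntervalIntegrable f volume (t 0) (t N) := by
  induction N with
  | zero => exact IntervalIntegrable.refl
  | succ N ih =>
    obtain ⟨fc, hfc, hffc⟩ := hf N N.lt_succ_self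
    exact (ih (fun j hj => hf j (by omega)) fun j hj => ht j (by omega)).trans
      (intervalIntegrable_of_eqOn_Ioo (ht N N.lt_succ_self) hfc hffc)

theorem IsPiecewiseContinuous.hasDerivAt_integral {E : Type*} [NormedAddCommGroup E]
    [NormedSpace ℝ E] [CompleteSpace E] {f : ℝ → E} (hf : IsPiecewiseContinuous N t f)
    (ht : ∀ j < N, t j ≤ t (j + 1)) {a : ℝ} (ha : a ∈ Icc (t 0) (t N)) {j : ℕ} (hj : j < N)
    {s : ℝ} (hs : s ∈ Ioo (t j) (t (j + 1))) :
    HasDerivAt (fun x => ∫ y in a..x, f y) (f s) s :=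
  intervalIntegral.integral_hasDerivAt_right
    ((hf.intervalIntegrable ht).mono_Icc ha (Icc_mesh_subset ht hj (Ioo_subset_Icc_self hs)))
    ((hf.continuousOn_Ioo hj).stronglyMeasurableAtFilter isOpen_Ioo s hs)
    ((hf.continuousOn_Ioo hj).continuousAt (isOpen_Ioo.mem_nhds hs))

end Mesh

section VariationOfConstants

variable {n : Type*} [Fintype n] [DecidableEq n]

theorem integral_green_mulVec {m : Type*} [Fintype m] {P : Matrix m n ℝ} {C D : Matrix n n ℝ}
    (hCD : C + D = 1) {Ψ : ℝ → Matrix n n ℝ} {f : ℝ → n → ℝ} {a b τ : ℝ} (hτ : τ ∈ Icc a b)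
    (hΨf : IntervalIntegrable (fun s => Ψ s *ᵥ f s) volume a b) :
    ∫ s in a..b, (if s ≤ τ then P * C * Ψ s else -(P * D * Ψ s)) *ᵥ f s =
      P *ᵥ ((∫ s in a..τ, Ψ s *ᵥ f s) - D *ᵥ ∫ s in a..b, Ψ s *ᵥ f s) := by
  have ha : a ∈ Icc a b := left_mem_Icc.2 (hτ.1.trans hτ.2)
  have hb : b ∈ Icc a b := right_mem_Icc.2 (hτ.1.trans hτ.2)
  have hkernel : ∀ s, (if s ≤ τ then P * C * Ψ s else -(P * D * Ψ s)) *ᵥ f s =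
      if s ≤ τ then (P * C) *ᵥ (Ψ s *ᵥ f s) else -((P * D) *ᵥ (Ψ s *ᵥ f s)) := fun s => by
    split_ifs <;> simp only [neg_mulVec, mulVec_mulVec]
  simp_rw [hkernel]
  refine (intervalIntegral.integral_ite_le (g := fun s => -((P * D) *ᵥ (Ψ s *ᵥ f s))) hτ
    ((hΨf.mono_Icc ha hτ).const_mulVec _) ((hΨf.mono_Icc hτ hb).const_mulVec _).neg).trans ?_
  rw [intervalIntegral.integral_neg,
    intervalIntegral.integral_const_mulVec _ (hΨf.mono_Icc ha hτ),
    intervalIntegral.integral_const_mulVec _ (hΨf.mono_Icc hτ hb),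
    ← intervalIntegral.integral_interval_sub_left hΨf (hΨf.mono_Icc ha hτ), eq_sub_of_add_eq hCD]
  simp only [← mulVec_mulVec, sub_mulVec, one_mulVec, mulVec_sub]
  abel

theorem hasDerivAt_mulVec_const_add_of_hasDerivAt_inv_mulVec {Φ : ℝ → Matrix n n ℝ}
    {A : Matrix n n ℝ} {R : ℝ → n → ℝ} {f c : n → ℝ} {s : ℝ} (hΦ : HasDerivAt Φ (A * Φ s) s)
    (hu : IsUnit (Φ s)) (hR : HasDerivAt R ((Φ s)⁻¹ *ᵥ f) s) :
    HasDerivAt (fun τ => Φ τ *ᵥ (c + R τ)) (A *ᵥ (Φ s *ᵥ (c + R s)) + f) s := by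
  convert hΦ.matrix_mulVec (hR.const_add c) using 1
  rw [mulVec_mulVec, mulVec_mulVec, mul_nonsing_inv _ ((isUnit_iff_isUnit_det _).mp hu),
    one_mulVec]

variable {N : ℕ} {t : ℕ → ℝ} {A Φ : ℝ → Matrix n n ℝ} {r : ℝ → n → ℝ}

theorem IsPiecewiseContinuous.inv_mulVec_mulVec (ht : ∀ j < N, t j ≤ t (j + 1))
    (hA : IsPiecewiseContinuous N t A) (hΦc : ContinuousOn Φ (Icc (t 0) (t N)))
    (hΦu : ∀ s ∈ Icc (t 0) (t N), IsUnit (Φ s)) (hr : ContinuousOn r (Icc (t 0) (t N))) :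
    IsPiecewiseContinuous N t fun s => (Φ s)⁻¹ *ᵥ (A s *ᵥ r s) :=
  ((hΦc.matrix_inv hΦu).isPiecewiseContinuous ht).matrix_mulVec
    (hA.matrix_mulVec (hr.isPiecewiseContinuous ht))

theorem sub_sub_integral_eq_of_eq_variationOfConstants (ht : ∀ j < N, t j ≤ t (j + 1))
    (hA : IsPiecewiseContinuous N t A) (hΦc : ContinuousOn Φ (Icc (t 0) (t N)))
    (hΦd : ∀ j < N, ∀ s ∈ Ioo (t j) (t (j + 1)), HasDerivAt Φ (A s * Φ s) s)
    (hΦu : ∀ s ∈ Icc (t 0) (t N), IsUnit (Φ s)) (hr : ContinuousOn r (Icc (t 0) (t N)))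
    {v : ℝ → n → ℝ} (c : n → ℝ)
    (hv : ∀ τ ∈ Icc (t 0) (t N),
      v τ = Φ τ *ᵥ (c + ∫ s in t 0..τ, (Φ s)⁻¹ *ᵥ (A s *ᵥ r s)) + r τ)
    {τ : ℝ} (hτ : τ ∈ Icc (t 0) (t N)) :
    v τ - v (t 0) - ∫ s in t 0..τ, A s *ᵥ v s = r τ - r (t 0) := by
  have hρ := IsPiecewiseContinuous.inv_mulVec_mulVec ht hA hΦc hΦu hr
  have h0 : t 0 ∈ Icc (t 0) (t N) := left_mem_Icc.2 (hτ.1.trans hτ.2)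
  have hRc : ContinuousOn (fun τ => ∫ s in t 0..τ, (Φ s)⁻¹ *ᵥ (A s *ᵥ r s)) (Icc (t 0) (t N)) := by
    simpa only [uIcc_of_le h0.2] using
      intervalIntegral.continuousOn_primitive_interval' (hρ.intervalIntegrable ht) left_mem_uIcc
  have hgc : ContinuousOn (fun τ => Φ τ *ᵥ (c + ∫ s in t 0..τ, (Φ s)⁻¹ *ᵥ (A s *ᵥ r s)))
      (Icc (t 0) (t N)) := hΦc.matrix_mulVec (continuousOn_const.add hRc)
  have hg' : ∀ j < N, ∀ s ∈ Ioo (t j) (t (j + 1)), HasDerivAt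
      (fun τ => Φ τ *ᵥ (c + ∫ s in t 0..τ, (Φ s)⁻¹ *ᵥ (A s *ᵥ r s))) (A s *ᵥ v s) s := by
    intro j hj s hs
    have hs' := Icc_mesh_subset ht hj (Ioo_subset_Icc_self hs)
    rw [hv s hs', mulVec_add]
    exact hasDerivAt_mulVec_const_add_of_hasDerivAt_inv_mulVec (hΦd j hj s hs) (hΦu s hs')
      (hρ.hasDerivAt_integral ht h0 hj hs)
  have hAv := hA.matrix_mulVec (((hgc.add hr).congr hv).isPiecewiseContinuous ht)
  rw [integral_eq_sub_of_hasDerivAt_mesh ht hgc hg' (hAv.intervalIntegrable ht) hτ, hv τ hτ,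
    hv _ h0, intervalIntegral.integral_same]
  abel

end VariationOfConstants

theorem stmt_7_general {n : ℕ} (A : ℝ → Matrix (Fin n) (Fin n) ℝ)
    (B₀ B₁ : Matrix (Fin n) (Fin n) ℝ) (N : ℕ) (t : ℕ → ℝ)
    (ht : ∀ j < N, t j < t (j+1)) (ht0 : t 0 = 0) (htN : t N = 1)
    (hA : ∀ j < N, ∃ Ac : ℝ → Matrix (Fin n) (Fin n) ℝ,
      ContinuousOn Ac (Set.Icc (t j) (t (j+1))) ∧
      ∀ s ∈ Set.Ioo (t j) (t (j+1)), A s = Ac s)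
    (Φ : ℝ → Matrix (Fin n) (Fin n) ℝ) (hΦ : IsBVPFundSol A B₀ B₁ N t Φ)
    (G : ℝ → ℝ → Matrix (Fin n) (Fin n) ℝ)
    (hG : ∀ τ s : ℝ, G τ s =
      if s ≤ τ then Φ τ * (B₀ * Φ 0) * (Φ s)⁻¹ else -(Φ τ * (B₁ * Φ 1) * (Φ s)⁻¹))
    (r : ℝ → Fin n → ℝ) (hr : ContinuousOn r (Set.Icc 0 1)) (hr0 : r 0 = 0)
    (w : Fin n → ℝ) (v : ℝ → Fin n → ℝ)
    (hv : ∀ τ : ℝ, v τ =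
      Φ τ *ᵥ (w - B₁ *ᵥ r 1) + r τ + ∫ s in (0:ℝ)..1, G τ s *ᵥ (A s *ᵥ r s)) :
    (∀ τ ∈ Set.Icc (0:ℝ) 1, v τ - v 0 - (∫ s in (0:ℝ)..τ, A s *ᵥ v s) = r τ) ∧
    B₀ *ᵥ v 0 + B₁ *ᵥ v 1 = w := by
  obtain ⟨hΦc, hΦd, hΦbc, hΦu⟩ := hΦ
  have hmesh : ∀ j < N, t j ≤ t (j + 1) := fun j hj => (ht j hj).le
  have hI : Icc (t 0) (t N) = Icc 0 1 := by rw [ht0, htN]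
  rw [← hI] at hΦc hΦu hr
  have hρ : IntervalIntegrable (fun s => (Φ s)⁻¹ *ᵥ (A s *ᵥ r s)) volume 0 1 := ht0 ▸ htN ▸
    (IsPiecewiseContinuous.inv_mulVec_mulVec hmesh hA hΦc hΦu hr).intervalIntegrable hmesh
  set R : ℝ → Fin n → ℝ := fun τ => ∫ s in (0:ℝ)..τ, (Φ s)⁻¹ *ᵥ (A s *ᵥ r s)
  set c := w - B₁ *ᵥ r 1 - (B₁ * Φ 1) *ᵥ R 1
  have hvR : ∀ τ ∈ Icc (0:ℝ) 1, v τ = Φ τ *ᵥ (c + R τ) + r τ := by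
    intro τ hτ
    rw [hv, funext (hG τ), integral_green_mulVec hΦbc hτ hρ]
    simp only [c, mulVec_add, mulVec_sub]
    abel
  refine ⟨fun τ hτ => ?_, ?_⟩
  · simpa only [ht0, hr0, sub_zero] using sub_sub_integral_eq_of_eq_variationOfConstants hmesh hA
      hΦc hΦd hΦu hr c (by rw [hI, ht0]; exact hvR) (hI ▸ hτ)
  · have hR0 : R 0 = 0 := intervalIntegral.integral_same
    rw [hvR 0 (left_mem_Icc.2 zero_le_one), hvR 1 (right_mem_Icc.2 zero_le_one), hr0, hR0]
    simp only [add_zero, mulVec_add, mulVec_mulVec]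
    rw [← add_assoc, ← add_assoc, ← add_mulVec, hΦbc, one_mulVec]
    simp only [c]
    abel

theorem stmt_7 {n : ℕ} (A : ℝ → Matrix (Fin n) (Fin n) ℝ)
    (B₀ B₁ : Matrix (Fin n) (Fin n) ℝ) (N : ℕ) (hN : 0 < N) (t : ℕ → ℝ)
    (ht : ∀ j < N, t j < t (j+1)) (ht0 : t 0 = 0) (htN : t N = 1)
    (hA : ∀ j < N, ∃ Ac : ℝ → Matrix (Fin n) (Fin n) ℝ,
      ContinuousOn Ac (Set.Icc (t j) (t (j+1))) ∧
      ∀ s ∈ Set.Ioo (t j) (t (j+1)), A s = Ac s)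
    (Φ : ℝ → Matrix (Fin n) (Fin n) ℝ) (hΦ : IsBVPFundSol A B₀ B₁ N t Φ)
    (G : ℝ → ℝ → Matrix (Fin n) (Fin n) ℝ)
    (hG : ∀ τ s : ℝ, G τ s =
      if s ≤ τ then Φ τ * (B₀ * Φ 0) * (Φ s)⁻¹ else -(Φ τ * (B₁ * Φ 1) * (Φ s)⁻¹))
    (r : ℝ → Fin n → ℝ) (hr : ContinuousOn r (Set.Icc 0 1)) (hr0 : r 0 = 0)
    (w : Fin n → ℝ) (v : ℝ → Fin n → ℝ)
    (hv : ∀ τ : ℝ, v τ =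
      Φ τ *ᵥ (w - B₁ *ᵥ r 1) + r τ + ∫ s in (0:ℝ)..1, G τ s *ᵥ (A s *ᵥ r s)) :
    (∀ τ ∈ Set.Icc (0:ℝ) 1, v τ - v 0 - (∫ s in (0:ℝ)..τ, A s *ᵥ v s) = r τ) ∧
    B₀ *ᵥ v 0 + B₁ *ᵥ v 1 = w :=
  stmt_7_general A B₀ B₁ N t ht ht0 htN hA Φ hΦ G hG r hr hr0 w v hv
end

section
/- Let A : [0,1] → ℝ^{n×n} be C^m on an interval [t_{j-1}, t_j] with Taylor expansion A(t) = Σ_{k=0}^{m-1} A_k (t - c)^k + r_m(t)(t-c)^m about the midpoint c. Define the matrix polynomial I + E(t) = Σ_{k=0}^m E^k (t-c)^k by E^0 = I and E^k = (1/k) Σ_{l=0}^{k-1} A_l E^{k-l-1}. Then A(t)(I + E(t)) - E'(t) is a polynomial (plus remainder) all of whose terms have degree at least m in (t-c); i.e., using the truncated expansion with A_m := r_m(t), A(t)(I+E(t)) - E'(t) = Σ_{k=m}^{2m} (t-c)^k Σ_{l=0}^{m} A_l E^{k-l} where E^k := 0 for k > m. -/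
/-!
Write `x = t - c` and let `B` be the coefficient sequence of `A`, with `B m = r_m(t)`. The product
`A(t)(I + E(t))` is the Cauchy product `∑ⱼ xʲ ∑_{l ≤ j} B l E^{j-l}`. For `j < m` the recursion
defining `E` says exactly that the `j`-th coefficient equals `(j + 1) E^{j+1}`, the `j`-th
coefficient of `E'(t)`; so subtracting `E'(t)` leaves the coefficients with `m ≤ j ≤ 2m`.
-/

open Finset

theorem sum_range_pow_smul_mul_sum_range_pow_smul {𝕜 R : Type*} [CommSemiring 𝕜] [Semiring R]
    [Algebra 𝕜 R] (x : 𝕜) (f g : ℕ → R) {p q : ℕ}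
    (hg : ∀ k, q < k → g k = 0) :
    (∑ l ∈ range (p + 1), x ^ l • f l) * (∑ k ∈ range (q + 1), x ^ k • g k)
      = ∑ j ∈ range (p + q + 1), x ^ j • ∑ l ∈ range (p + 1) with l ≤ j, f l * g (j - l) := by
  have hrow : ∀ l ∈ range (p + 1),
      ∑ k ∈ range (q + 1), x ^ (l + k) • (f l * g k)
        = ∑ j ∈ Ico l (p + q + 1), x ^ j • (f l * g (j - l)) := by
    intro l hl
    have hlp : l ≤ p := Nat.lt_succ_iff.mp (mem_range.mp hl)
    rw [sum_Ico_eq_sum_range]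
    simp only [Nat.add_sub_cancel_left]
    refine sum_subset (fun k hk => by simp only [mem_range] at hk ⊢; omega) fun k hk hk' => ?_
    simp only [mem_range] at hk hk'
    rw [hg k (by omega), mul_zero, smul_zero]
  simp only [smul_sum]
  rw [sum_mul_sum, sum_comm' (s := range (p + q + 1)) (t' := range (p + 1))
    (s' := fun l => Ico l (p + q + 1))]
  · refine sum_congr rfl fun l hl => ?_
    rw [← hrow l hl]
    refine sum_congr rfl fun k _ => ?_
    rw [smul_mul_smul_comm, pow_add]
  · intro j l
    simp only [mem_range, mem_filter, mem_Ico]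
    omega

theorem natCast_add_one_smul_eq_sum_of_eq_inv_smul {𝕜 R : Type*} [Field 𝕜] [CharZero 𝕜] [Ring R]
    [Module 𝕜 R] (a e : ℕ → R) (j : ℕ)
    (h : e (j + 1) = ((j + 1 : ℕ) : 𝕜)⁻¹ • ∑ l ∈ range (j + 1), a l * e (j + 1 - l - 1)) :
    ((j : 𝕜) + 1) • e (j + 1) = ∑ l ∈ range (j + 1), a l * e (j - l) := by
  rw [h, smul_smul, Nat.cast_succ, mul_inv_cancel₀ (Nat.cast_add_one_ne_zero j), one_smul]
  refine sum_congr rfl fun l _ => ?_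
  rw [Nat.sub_right_comm, Nat.add_sub_cancel]

theorem stmt_17_general {n m : ℕ} (c : ℝ)
    (A : ℝ → Matrix (Fin n) (Fin n) ℝ)
    (Acoef : ℕ → Matrix (Fin n) (Fin n) ℝ) (rm : ℝ → Matrix (Fin n) (Fin n) ℝ)
    (hA : ∀ t : ℝ, A t = (∑ k ∈ Finset.range m, (t - c) ^ k • Acoef k)
      + (t - c) ^ m • rm t)
    (E : ℕ → Matrix (Fin n) (Fin n) ℝ)
    (hErec : ∀ k, 1 ≤ k → k ≤ m →
      E k = ((k : ℝ)⁻¹) • ∑ l ∈ Finset.range k, Acoef l * E (k - l - 1))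
    (hEzero : ∀ k, m < k → E k = 0) :
    ∀ t : ℝ,
      A t * (∑ k ∈ Finset.range (m + 1), (t - c) ^ k • E k)
        - (∑ k ∈ Finset.range m, (((k : ℝ) + 1) * (t - c) ^ k) • E (k + 1))
      = ∑ k ∈ Finset.Icc m (2 * m), (t - c) ^ k •
          ∑ l ∈ Finset.range (m + 1), (if l = m then rm t else Acoef l) * E (k - l) := by
  intro t
  set B : ℕ → Matrix (Fin n) (Fin n) ℝ := fun l => if l = m then rm t else Acoef l
  have hBlt : ∀ l < m, B l = Acoef l := fun l hl => if_neg hl.ne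
  have hAt : A t = ∑ l ∈ range (m + 1), (t - c) ^ l • B l := by
    rw [hA t, sum_range_succ, show B m = rm t from if_pos rfl]
    congr 1
    exact sum_congr rfl fun l hl => by rw [hBlt l (mem_range.mp hl)]
  have hlow : ∀ j ∈ range m, (t - c) ^ j • ∑ l ∈ range (m + 1) with l ≤ j, B l * E (j - l)
      = (((j : ℝ) + 1) * (t - c) ^ j) • E (j + 1) := by
    intro j hj
    have hjm := mem_range.mp hj
    rw [mul_comm, ← smul_smul,
      natCast_add_one_smul_eq_sum_of_eq_inv_smul Acoef E j (hErec (j + 1) (by omega) hjm)]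
    congr 1
    refine sum_congr (by ext l; simp only [mem_filter, mem_range]; omega) fun l hl => ?_
    rw [hBlt l (by simp only [mem_range] at hl; omega)]
  have hhigh : ∀ j ∈ Ico m (2 * m + 1), ∑ l ∈ range (m + 1) with l ≤ j, B l * E (j - l)
      = ∑ l ∈ range (m + 1), B l * E (j - l) := by
    intro j hj
    rw [filter_true_of_mem fun l hl => by simp only [mem_range, mem_Ico] at hl hj; omega]
  rw [hAt, sum_range_pow_smul_mul_sum_range_pow_smul _ _ _ hEzero, ← two_mul,
    ← sum_range_add_sum_Ico _ (by omega : m ≤ 2 * m + 1), sum_congr rfl hlow, add_sub_cancel_left,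
    ← Ico_add_one_right_eq_Icc]
  exact sum_congr rfl fun j hj => by rw [hhigh j hj]

theorem stmt_17 {n m : ℕ} (hm : 1 ≤ m) (c : ℝ)
    (A : ℝ → Matrix (Fin n) (Fin n) ℝ)
    (Acoef : ℕ → Matrix (Fin n) (Fin n) ℝ) (rm : ℝ → Matrix (Fin n) (Fin n) ℝ)
    (hA : ∀ t : ℝ, A t = (∑ k ∈ Finset.range m, (t - c) ^ k • Acoef k)
      + (t - c) ^ m • rm t)
    (E : ℕ → Matrix (Fin n) (Fin n) ℝ) (hE0 : E 0 = 1)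
    (hErec : ∀ k, 1 ≤ k → k ≤ m →
      E k = ((k : ℝ)⁻¹) • ∑ l ∈ Finset.range k, Acoef l * E (k - l - 1))
    (hEzero : ∀ k, m < k → E k = 0) :
    ∀ t : ℝ,
      A t * (∑ k ∈ Finset.range (m + 1), (t - c) ^ k • E k)
        - (∑ k ∈ Finset.range m, (((k : ℝ) + 1) * (t - c) ^ k) • E (k + 1))
      = ∑ k ∈ Finset.Icc m (2 * m), (t - c) ^ k •
          ∑ l ∈ Finset.range (m + 1), (if l = m then rm t else Acoef l) * E (k - l) :=
  stmt_17_general c A Acoef rm hA E hErec hEzero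
end

section
/- Let A_k ∈ ℝ^{n×n}, k = 0,...,m-1, and define recursively E^0 = I, E^k = (1/k)Σ_{l=0}^{k-1} A_l E^{k-l-1}, and F^0 = I, F^k = -(1/k)Σ_{l=0}^{k-1} F^{k-l-1} A_l for k = 1,...,m. Then the polynomial products satisfy: the coefficient of (t-c)^k in (I + F(t))(I + E(t)) vanishes for 1 ≤ k ≤ m, where E(t) = Σ_{k=1}^m E^k (t-c)^k and F(t) = Σ_{k=1}^m F^k (t-c)^k; i.e., (I+F(t))(I+E(t)) = I + (terms of degree > m). -/
/-!
Encode the coefficient sequences as formal power series `f`, `a`, `e` over the (noncommutative)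
matrix ring. The recursions say `e' = a e` and `f' = -f a` up to degree `m - 1`, so by the
Leibniz rule `(f e)' = -f a e + f a e = 0` up to degree `m - 1`: the coefficients of `f e` in
degrees `1, …, m` vanish once the factors `k` are cancelled.
-/

open Finset PowerSeries

namespace PowerSeries

variable {R : Type*} [Ring R]

theorem succ_nsmul_coeff_succ_mul (f g : R⟦X⟧) (k : ℕ) :
    (k + 1) • coeff (k + 1) (f * g) = ∑ p ∈ antidiagonal k,
      ((p.1 + 1) • coeff (p.1 + 1) f * coeff p.2 g
        + coeff p.1 f * ((p.2 + 1) • coeff (p.2 + 1) g)) := by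
  have hf : ∑ p ∈ antidiagonal k, (p.1 + 1) • coeff (p.1 + 1) f * coeff p.2 g
      = ∑ p ∈ antidiagonal (k + 1), p.1 • coeff p.1 f * coeff p.2 g := by
    simp [Nat.sum_antidiagonal_succ]
  have hg : ∑ p ∈ antidiagonal k, coeff p.1 f * ((p.2 + 1) • coeff (p.2 + 1) g)
      = ∑ p ∈ antidiagonal (k + 1), coeff p.1 f * (p.2 • coeff p.2 g) := by
    simp [Nat.sum_antidiagonal_succ']
  rw [sum_add_distrib, hf, hg, ← sum_add_distrib, coeff_mul, smul_sum]
  refine sum_congr rfl fun p hp => ?_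
  rw [← HasAntidiagonal.mem_antidiagonal.mp hp, add_smul, smul_mul_assoc, mul_smul_comm]

theorem coeff_mk_mul_mk (G H : ℕ → R) (i : ℕ) :
    coeff i (mk G * mk H) = ∑ l ∈ range (i + 1), G l * H (i - l) := by
  simp only [coeff_mul, coeff_mk]
  exact Nat.sum_antidiagonal_eq_sum_range_succ (fun a b => G a * H b) i

theorem coeff_mk_mul_mk' (G H : ℕ → R) (i : ℕ) :
    coeff i (mk G * mk H) = ∑ l ∈ range (i + 1), G (i - l) * H l := by
  rw [coeff_mk_mul_mk, ← sum_range_reflect]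
  refine sum_congr rfl fun l hl => ?_
  rw [mem_range] at hl
  rw [Nat.add_sub_cancel, Nat.sub_sub_self (by omega)]

theorem succ_nsmul_coeff_succ_mul_eq_zero {f e a : R⟦X⟧} {m : ℕ}
    (he : ∀ i < m, (i + 1) • coeff (i + 1) e = coeff i (a * e))
    (hf : ∀ i < m, (i + 1) • coeff (i + 1) f = -coeff i (f * a))
    {k : ℕ} (hk : k < m) : (k + 1) • coeff (k + 1) (f * e) = 0 := by
  have hsubst : ∀ p ∈ antidiagonal k,
      (p.1 + 1) • coeff (p.1 + 1) f * coeff p.2 e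
          + coeff p.1 f * ((p.2 + 1) • coeff (p.2 + 1) e)
        = -(coeff p.1 (f * a) * coeff p.2 e) + coeff p.1 f * coeff p.2 (a * e) := by
    intro p hp
    rw [HasAntidiagonal.mem_antidiagonal] at hp
    rw [hf p.1 (by omega), he p.2 (by omega), neg_mul]
  rw [succ_nsmul_coeff_succ_mul, sum_congr rfl hsubst, sum_add_distrib, sum_neg_distrib,
    ← coeff_mul, ← coeff_mul, mul_assoc, neg_add_cancel]

theorem coeff_succ_mul_eq_zero [IsAddTorsionFree R] {f e a : R⟦X⟧} {m : ℕ}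
    (he : ∀ i < m, (i + 1) • coeff (i + 1) e = coeff i (a * e))
    (hf : ∀ i < m, (i + 1) • coeff (i + 1) f = -coeff i (f * a))
    {k : ℕ} (hk : k < m) : coeff (k + 1) (f * e) = 0 :=
  (nsmul_eq_zero_iff.mp (succ_nsmul_coeff_succ_mul_eq_zero he hf hk)).resolve_right k.succ_ne_zero

end PowerSeries

theorem stmt_18_general {n m : ℕ}
    (Acoef : ℕ → Matrix (Fin n) (Fin n) ℝ)
    (E F : ℕ → Matrix (Fin n) (Fin n) ℝ)
    (hErec : ∀ k, 1 ≤ k → k ≤ m →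
      E k = ((k : ℝ)⁻¹) • ∑ l ∈ Finset.range k, Acoef l * E (k - l - 1))
    (hFrec : ∀ k, 1 ≤ k → k ≤ m →
      F k = -(((k : ℝ)⁻¹) • ∑ l ∈ Finset.range k, F (k - l - 1) * Acoef l)) :
    ∀ k, 1 ≤ k → k ≤ m → ∑ l ∈ Finset.range (k + 1), F l * E (k - l) = 0 := by
  have : IsAddTorsionFree (Matrix (Fin n) (Fin n) ℝ) := .of_module_rat _
  have hE : ∀ i < m, (i + 1) • coeff (i + 1) (mk E) = coeff i (mk Acoef * mk E) := by
    intro i hi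
    rw [coeff_mk, coeff_mk_mul_mk, ← Nat.cast_smul_eq_nsmul ℝ, hErec (i + 1) (by omega) hi,
      smul_inv_smul₀ (by positivity)]
    simp only [Nat.sub_right_comm _ _ 1, Nat.add_sub_cancel]
  have hF : ∀ i < m, (i + 1) • coeff (i + 1) (mk F) = -coeff i (mk F * mk Acoef) := by
    intro i hi
    rw [coeff_mk, coeff_mk_mul_mk', ← Nat.cast_smul_eq_nsmul ℝ, hFrec (i + 1) (by omega) hi,
      smul_neg, smul_inv_smul₀ (by positivity)]
    simp only [Nat.sub_right_comm _ _ 1, Nat.add_sub_cancel]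
  rintro (_ | k) hk hkm
  · omega
  · rw [← coeff_mk_mul_mk]
    exact coeff_succ_mul_eq_zero hE hF hkm

theorem stmt_18 {n m : ℕ} (hm : 1 ≤ m)
    (Acoef : ℕ → Matrix (Fin n) (Fin n) ℝ)
    (E F : ℕ → Matrix (Fin n) (Fin n) ℝ) (hE0 : E 0 = 1) (hF0 : F 0 = 1)
    (hErec : ∀ k, 1 ≤ k → k ≤ m →
      E k = ((k : ℝ)⁻¹) • ∑ l ∈ Finset.range k, Acoef l * E (k - l - 1))
    (hFrec : ∀ k, 1 ≤ k → k ≤ m →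
      F k = -(((k : ℝ)⁻¹) • ∑ l ∈ Finset.range k, F (k - l - 1) * Acoef l)) :
    ∀ k, 1 ≤ k → k ≤ m → ∑ l ∈ Finset.range (k + 1), F l * E (k - l) = 0 :=
  stmt_18_general Acoef E F hErec hFrec
end

section
/- Let X, Y be Banach spaces, D ⊆ X open and convex, F : D → Y differentiable with ‖DF(x) - DF(y)‖ ≤ K‖x - y‖ on D. Let y₀ ∈ D with DF(y₀) boundedly invertible with inverse A, and suppose β ≥ ‖A‖, η ≥ ‖A F(y₀)‖, and h := βKη ≤ 1/2. Set s₀ = (1 - √(1-2h))/(βK) and assume the closed ball S of radius s₀ about y₀ is contained in D. Then there exists x ∈ S with F(x) = 0, and x is the unique zero of F in D ∩ B_{s₁}(y₀) where s₁ = (1 + √(1-2h))/(βK). -/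
/-!
The zeros of `F` are the fixed points of the simplified Newton map `G u = u - A (F u)`, whose
derivative `id - A ∘ DF(u) = A ∘ (DF(y₀) - DF(u))` has norm at most `βK‖u - y₀‖`. Integrating
along segments gives `‖G x - G y‖ ≤ βK/2 (‖x - y₀‖ + ‖y - y₀‖) ‖x - y‖`. Hence the steps of the
iterates `Gⁿ y₀` are dominated by those of the scalar recursion `t₀ = 0, tₙ₊₁ = η + βK/2 tₙ²`,
which increases to the smaller root `s₀` of `βK/2 s² - s + η`; so the iterates converge in the
closed ball of radius `s₀`. Two fixed points `x, z` with `‖x - y₀‖ ≤ s₀`, `‖z - y₀‖ < s₁` satisfy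
`‖z - x‖ ≤ βK/2 (‖z - y₀‖ + ‖x - y₀‖) ‖z - x‖` with factor `< βK/2 (s₀ + s₁) = 1`, so they agree.
-/

open Set Filter Topology Metric Function

theorem norm_add_smul_sub_sub_le {E : Type*} [SeminormedAddCommGroup E] [NormedSpace ℝ E]
    {x y y₀ : E} {s : ℝ} (hs0 : 0 ≤ s) (hs1 : s ≤ 1) :
    ‖y + s • (x - y) - y₀‖ ≤ ‖y - y₀‖ + (‖x - y₀‖ - ‖y - y₀‖) * s := calc
  ‖y + s • (x - y) - y₀‖ = ‖(1 - s) • (y - y₀) + s • (x - y₀)‖ := by congr 1; module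
  _ ≤ (1 - s) * ‖y - y₀‖ + s * ‖x - y₀‖ := by
    refine (norm_add_le _ _).trans_eq ?_
    rw [norm_smul, norm_smul, Real.norm_of_nonneg (by linarith), Real.norm_of_nonneg hs0]
  _ = ‖y - y₀‖ + (‖x - y₀‖ - ‖y - y₀‖) * s := by ring

/-- The average, not the maximum, of the endpoint distances to `y₀`: the sharp constants
`h ≤ 1/2` and `s₁` need exactly this. -/
theorem Convex.norm_image_sub_le_of_norm_hasFDerivAt_le_mul_norm_sub
    {E F : Type*} [NormedAddCommGroup E] [NormedSpace ℝ E] [NormedAddCommGroup F]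
    [NormedSpace ℝ F] {D : Set E} (hD : Convex ℝ D) {G : E → F} {G' : E → E →L[ℝ] F}
    (hG : ∀ u ∈ D, HasFDerivAt G (G' u) u) {C : ℝ} (hC : 0 ≤ C) {y₀ : E}
    (hG' : ∀ u ∈ D, ‖G' u‖ ≤ C * ‖u - y₀‖) {x y : E} (hx : x ∈ D) (hy : y ∈ D) :
    ‖G x - G y‖ ≤ C / 2 * (‖x - y₀‖ + ‖y - y₀‖) * ‖x - y‖ := by
  set a := ‖y - y₀‖
  set b := ‖x - y₀‖
  set ξ : ℝ → E := fun s => y + s • (x - y)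
  have hξD : ∀ s ∈ Icc (0 : ℝ) 1, ξ s ∈ D := fun s hs => by
    simpa [ξ] using hD.add_smul_sub_mem hy hx hs
  have hξ' : ∀ s, HasDerivAt ξ (x - y) s := fun s => by
    simpa [ξ] using ((hasDerivAt_id s).smul_const (x - y)).const_add y
  have hf : ∀ s ∈ Icc (0 : ℝ) 1,
      HasDerivAt (fun s => G (ξ s) - G y) (G' (ξ s) (x - y)) s := fun s hs =>
    ((hG _ (hξD s hs)).comp_hasDerivAt s (hξ' s)).sub_const (G y)
  have hB : ∀ s, HasDerivAt (fun s => C * ‖x - y‖ * (a * s + (b - a) * s ^ 2 / 2))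
      (C * ‖x - y‖ * (a + (b - a) * s)) s := fun s => by
    refine ((((hasDerivAt_id s).const_mul a).add
      (((hasDerivAt_pow 2 s).const_mul (b - a)).div_const 2)).const_mul _).congr_deriv ?_
    simp only [Nat.cast_ofNat, Nat.reduceSub, pow_one]; ring
  have hbound : ∀ s ∈ Ico (0 : ℝ) 1, ‖G' (ξ s) (x - y)‖ ≤ C * ‖x - y‖ * (a + (b - a) * s) := by
    intro s ⟨hs0, hs1⟩
    have hξy₀ : ‖ξ s - y₀‖ ≤ a + (b - a) * s := norm_add_smul_sub_sub_le hs0 hs1.le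
    calc ‖G' (ξ s) (x - y)‖ ≤ C * ‖ξ s - y₀‖ * ‖x - y‖ :=
          (G' (ξ s)).le_of_opNorm_le (hG' _ (hξD s ⟨hs0, hs1.le⟩)) _
      _ ≤ C * (a + (b - a) * s) * ‖x - y‖ := by gcongr
      _ = C * ‖x - y‖ * (a + (b - a) * s) := by ring
  have key := image_norm_le_of_norm_deriv_right_le_deriv_boundary
    (fun s hs => (hf s hs).continuousAt.continuousWithinAt)
    (fun s hs => (hf s (Ico_subset_Icc_self hs)).hasDerivWithinAt)
    (by simp [ξ]) hB hbound (right_mem_Icc.2 zero_le_one)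
  simp only [ξ, one_smul, add_sub_cancel] at key
  linarith

noncomputable def kantorovichSeq (η c : ℝ) : ℕ → ℝ
  | 0 => 0
  | n + 1 => η + c / 2 * kantorovichSeq η c n ^ 2

namespace kantorovichSeq

variable {η c : ℝ}

theorem nonneg (hη : 0 ≤ η) (hc : 0 ≤ c) : ∀ n, 0 ≤ kantorovichSeq η c n
  | 0 => le_rfl
  | n + 1 => by rw [kantorovichSeq]; positivity

theorem monotone (hη : 0 ≤ η) (hc : 0 ≤ c) : Monotone (kantorovichSeq η c) := by
  refine monotone_nat_of_le_succ fun n => ?_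
  induction n with
  | zero => simpa [kantorovichSeq] using hη
  | succ n ih =>
    have := nonneg hη hc n
    show η + c / 2 * kantorovichSeq η c n ^ 2 ≤ η + c / 2 * kantorovichSeq η c (n + 1) ^ 2
    gcongr

theorem le_of_add_half_mul_sq_le {s : ℝ} (hη : 0 ≤ η) (hc : 0 ≤ c)
    (hs : η + c / 2 * s ^ 2 ≤ s) : ∀ n, kantorovichSeq η c n ≤ s
  | 0 => by simp only [kantorovichSeq]; nlinarith
  | n + 1 => by
    have := nonneg hη hc n
    have := le_of_add_half_mul_sq_le hη hc hs n
    rw [kantorovichSeq]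
    calc η + c / 2 * kantorovichSeq η c n ^ 2 ≤ η + c / 2 * s ^ 2 := by gcongr
      _ ≤ s := hs

end kantorovichSeq

section FixedPoint

variable {E : Type*} [NormedAddCommGroup E] {G : E → E} {D : Set E} {y₀ : E} {c η s : ℝ}

theorem norm_iterate_sub_le_kantorovichSeq (hc : 0 ≤ c)
    (hG : ∀ x ∈ D, ∀ y ∈ D, ‖G x - G y‖ ≤ c / 2 * (‖x - y₀‖ + ‖y - y₀‖) * ‖x - y‖)
    (hη : ‖G y₀ - y₀‖ ≤ η) (hs : η + c / 2 * s ^ 2 ≤ s) (hS : closedBall y₀ s ⊆ D) (n : ℕ) :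
    ‖G^[n] y₀ - y₀‖ ≤ kantorovichSeq η c n ∧
      ‖G^[n + 1] y₀ - G^[n] y₀‖ ≤ kantorovichSeq η c (n + 1) - kantorovichSeq η c n := by
  set t := kantorovichSeq η c
  have hη₀ : 0 ≤ η := (norm_nonneg _).trans hη
  have hmem : ∀ m, ‖G^[m] y₀ - y₀‖ ≤ t m → G^[m] y₀ ∈ D := fun m hm =>
    hS (mem_closedBall_iff_norm.2 (hm.trans (kantorovichSeq.le_of_add_half_mul_sq_le hη₀ hc hs m)))
  induction n with
  | zero => simpa [t, kantorovichSeq] using hη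
  | succ n ih =>
    obtain ⟨h₁, h₂⟩ := ih
    have h₃ : ‖G^[n + 1] y₀ - y₀‖ ≤ t (n + 1) := by
      linarith [norm_sub_le_norm_sub_add_norm_sub (G^[n + 1] y₀) (G^[n] y₀) y₀]
    have ht₀ : 0 ≤ t n := kantorovichSeq.nonneg hη₀ hc n
    have ht₁ : 0 ≤ t (n + 1) := kantorovichSeq.nonneg hη₀ hc (n + 1)
    refine ⟨h₃, ?_⟩
    calc ‖G^[n + 2] y₀ - G^[n + 1] y₀‖ = ‖G (G^[n + 1] y₀) - G (G^[n] y₀)‖ := by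
          rw [iterate_succ_apply' G (n + 1), iterate_succ_apply' G n]
      _ ≤ c / 2 * (‖G^[n + 1] y₀ - y₀‖ + ‖G^[n] y₀ - y₀‖) * ‖G^[n + 1] y₀ - G^[n] y₀‖ := by
          simpa only [iterate_succ_apply'] using hG _ (hmem _ h₃) _ (hmem _ h₁)
      _ ≤ c / 2 * (t (n + 1) + t n) * (t (n + 1) - t n) := by gcongr
      _ = t (n + 2) - t (n + 1) := by simp only [t, kantorovichSeq]; ring

theorem exists_isFixedPt_of_kantorovich [CompleteSpace E] (hc : 0 ≤ c)
    (hG : ∀ x ∈ D, ∀ y ∈ D, ‖G x - G y‖ ≤ c / 2 * (‖x - y₀‖ + ‖y - y₀‖) * ‖x - y‖)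
    (hη : ‖G y₀ - y₀‖ ≤ η) (hs : η + c / 2 * s ^ 2 ≤ s) (hS : closedBall y₀ s ⊆ D) :
    ∃ x ∈ closedBall y₀ s, IsFixedPt G x := by
  set t := kantorovichSeq η c
  have hη₀ : 0 ≤ η := (norm_nonneg _).trans hη
  have hiter := norm_iterate_sub_le_kantorovichSeq hc hG hη hs hS
  have hmem : ∀ n, G^[n] y₀ ∈ closedBall y₀ s := fun n => mem_closedBall_iff_norm.2
    ((hiter n).1.trans (kantorovichSeq.le_of_add_half_mul_sq_le hη₀ hc hs n))
  have hsummable : Summable fun n => t (n + 1) - t n := by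
    refine summable_of_sum_range_le (c := s)
      (fun n => sub_nonneg.2 (kantorovichSeq.monotone hη₀ hc n.le_succ)) fun n => ?_
    rw [Finset.sum_range_sub]
    simpa [t, kantorovichSeq] using kantorovichSeq.le_of_add_half_mul_sq_le hη₀ hc hs n
  have hcauchy : CauchySeq fun n => G^[n] y₀ :=
    cauchySeq_of_dist_le_of_summable _
      (fun n => by rw [dist_comm, dist_eq_norm]; exact (hiter n).2) hsummable
  obtain ⟨x, hx⟩ := cauchySeq_tendsto_of_complete hcauchy
  have hxs : x ∈ closedBall y₀ s := isClosed_closedBall.mem_of_tendsto hx (.of_forall hmem)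
  have hLip : LipschitzOnWith (c * s).toNNReal G (closedBall y₀ s) := by
    refine LipschitzOnWith.of_dist_le_mul fun u hu v hv => ?_
    rw [dist_eq_norm, dist_eq_norm]
    calc ‖G u - G v‖ ≤ c / 2 * (‖u - y₀‖ + ‖v - y₀‖) * ‖u - v‖ := hG _ (hS hu) _ (hS hv)
      _ ≤ c / 2 * (s + s) * ‖u - v‖ := by
        gcongr <;> exact mem_closedBall_iff_norm.1 ‹_›
      _ = c * s * ‖u - v‖ := by ring
      _ ≤ (c * s).toNNReal * ‖u - v‖ := by gcongr; exact Real.le_coe_toNNReal _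
  have hGx : Tendsto (fun n => G (G^[n] y₀)) atTop (𝓝 (G x)) :=
    (hLip.continuousOn x hxs).tendsto.comp (tendsto_nhdsWithin_iff.2 ⟨hx, .of_forall hmem⟩)
  refine ⟨x, hxs, tendsto_nhds_unique ?_ (hx.comp (tendsto_add_atTop_nat 1))⟩
  simpa only [comp_def, iterate_succ_apply'] using hGx

theorem eq_of_isFixedPt_of_kantorovich {x z : E}
    (hG : ∀ x ∈ D, ∀ y ∈ D, ‖G x - G y‖ ≤ c / 2 * (‖x - y₀‖ + ‖y - y₀‖) * ‖x - y‖)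
    (hz : z ∈ D) (hx : x ∈ D) (hGz : IsFixedPt G z) (hGx : IsFixedPt G x)
    (hlt : c / 2 * (‖z - y₀‖ + ‖x - y₀‖) < 1) : z = x := by
  by_contra hne
  have hpos : 0 < ‖z - x‖ := norm_pos_iff.2 (sub_ne_zero.2 hne)
  have := hG z hz x hx
  rw [hGz.eq, hGx.eq] at this
  nlinarith

end FixedPoint

theorem add_half_mul_sq_eq_of_eq_one_sub_sqrt {c η s : ℝ} (hc : 0 < c) (hcη : c * η ≤ 1 / 2)
    (hs : s = (1 - √(1 - 2 * (c * η))) / c) : η + c / 2 * s ^ 2 = s := by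
  have hr := Real.sq_sqrt (by linarith : 0 ≤ 1 - 2 * (c * η))
  generalize √(1 - 2 * (c * η)) = r at hr hs
  subst hs
  field_simp
  linear_combination hr

theorem ContinuousLinearMap.norm_id_sub_comp_le {X Y : Type*} [SeminormedAddCommGroup X]
    [NormedSpace ℝ X] [SeminormedAddCommGroup Y] [NormedSpace ℝ Y] {A : Y →L[ℝ] X}
    {T S : X →L[ℝ] Y} (hA : ∀ x, A (T x) = x) :
    ‖ContinuousLinearMap.id ℝ X - A.comp S‖ ≤ ‖A‖ * ‖T - S‖ := by
  have : ContinuousLinearMap.id ℝ X - A.comp S = A.comp (T - S) := by ext v; simp [hA]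
  rw [this]
  exact A.opNorm_comp_le _

section SimplifiedNewton

variable {X Y : Type*} [NormedAddCommGroup X] [NormedSpace ℝ X] [NormedAddCommGroup Y]
  [NormedSpace ℝ Y]

def simplifiedNewtonMap (A : Y →L[ℝ] X) (F : X → Y) (u : X) : X := u - A (F u)

theorem isFixedPt_simplifiedNewtonMap_iff {A : Y →L[ℝ] X} (hA : Injective A) {F : X → Y}
    {u : X} : IsFixedPt (simplifiedNewtonMap A F) u ↔ F u = 0 := by
  simp [IsFixedPt, simplifiedNewtonMap, map_eq_zero_iff A hA]

theorem norm_simplifiedNewtonMap_sub_le {D : Set X} (hD : Convex ℝ D) {F : X → Y}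
    {F' : X → X →L[ℝ] Y} (hF : ∀ x ∈ D, HasFDerivAt F (F' x) x) {K : ℝ} (hK : 0 ≤ K)
    (hLip : ∀ x ∈ D, ∀ y ∈ D, ‖F' x - F' y‖ ≤ K * ‖x - y‖) {y₀ : X} (hy₀ : y₀ ∈ D)
    {A : Y →L[ℝ] X} (hA : ∀ x, A (F' y₀ x) = x) {x y : X} (hx : x ∈ D) (hy : y ∈ D) :
    ‖simplifiedNewtonMap A F x - simplifiedNewtonMap A F y‖ ≤
      ‖A‖ * K / 2 * (‖x - y₀‖ + ‖y - y₀‖) * ‖x - y‖ := by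
  refine hD.norm_image_sub_le_of_norm_hasFDerivAt_le_mul_norm_sub
    (fun u hu => (hasFDerivAt_id u).sub (A.hasFDerivAt.comp u (hF u hu))) (by positivity)
    (fun u hu => ?_) hx hy
  calc _ ≤ ‖A‖ * ‖F' y₀ - F' u‖ := ContinuousLinearMap.norm_id_sub_comp_le hA
    _ ≤ ‖A‖ * (K * ‖y₀ - u‖) := by gcongr; exact hLip y₀ hy₀ u hu
    _ = ‖A‖ * K * ‖u - y₀‖ := by rw [norm_sub_rev]; ring

end SimplifiedNewton

theorem stmt_19_general {X Y : Type*} [NormedAddCommGroup X] [NormedSpace ℝ X] [CompleteSpace X]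
    [NormedAddCommGroup Y] [NormedSpace ℝ Y] [CompleteSpace Y]
    (D : Set X) (hconv : Convex ℝ D)
    (F : X → Y) (F' : X → X →L[ℝ] Y) (hF : ∀ x ∈ D, HasFDerivAt F (F' x) x)
    (K : ℝ) (hK : 0 < K)
    (hLip : ∀ x ∈ D, ∀ y ∈ D, ‖F' x - F' y‖ ≤ K * ‖x - y‖)
    (y₀ : X) (hy₀ : y₀ ∈ D)
    (A : Y →L[ℝ] X) (hA1 : ∀ x, A ((F' y₀) x) = x) (hA2 : ∀ y, (F' y₀) (A y) = y)
    (β η : ℝ) (hβ : 0 < β) (hβA : ‖A‖ ≤ β) (hη : ‖A (F y₀)‖ ≤ η)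
    (h : ℝ) (hdef : h = β * K * η) (hhalf : h ≤ 1 / 2)
    (s₀ s₁ : ℝ) (hs₀ : s₀ = (1 - Real.sqrt (1 - 2 * h)) / (β * K))
    (hs₁ : s₁ = (1 + Real.sqrt (1 - 2 * h)) / (β * K))
    (hS : Metric.closedBall y₀ s₀ ⊆ D) :
    ∃ x ∈ Metric.closedBall y₀ s₀, F x = 0 ∧
      ∀ z ∈ D ∩ Metric.ball y₀ s₁, F z = 0 → z = x := by
  subst hdef
  have hc : 0 < β * K := mul_pos hβ hK
  have hfix (u : X) := isFixedPt_simplifiedNewtonMap_iff (F := F) (u := u)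
    (LeftInverse.injective hA2)
  have hG : ∀ x ∈ D, ∀ y ∈ D, ‖simplifiedNewtonMap A F x - simplifiedNewtonMap A F y‖ ≤
      β * K / 2 * (‖x - y₀‖ + ‖y - y₀‖) * ‖x - y‖ := fun x hx y hy =>
    (norm_simplifiedNewtonMap_sub_le hconv hF hK.le hLip hy₀ hA1 hx hy).trans (by gcongr)
  obtain ⟨x, hxS, hx⟩ := exists_isFixedPt_of_kantorovich hc.le hG
    (by simpa [simplifiedNewtonMap] using hη)
    (add_half_mul_sq_eq_of_eq_one_sub_sqrt hc hhalf hs₀).le hS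
  refine ⟨x, hxS, (hfix x).1 hx, ?_⟩
  rintro z ⟨hzD, hz⟩ hFz
  refine eq_of_isFixedPt_of_kantorovich hG hzD (hS hxS) ((hfix z).2 hFz) hx ?_
  have hsum : β * K / 2 * (s₁ + s₀) = 1 := by rw [hs₀, hs₁]; field_simp; ring
  have hdist := add_lt_add_of_lt_of_le (mem_ball_iff_norm.1 hz) (mem_closedBall_iff_norm.1 hxS)
  calc _ < β * K / 2 * (s₁ + s₀) := by gcongr
    _ = 1 := hsum

/-- Newton–Kantorovich theorem. -/
theorem stmt_19 {X Y : Type*} [NormedAddCommGroup X] [NormedSpace ℝ X] [CompleteSpace X]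
    [NormedAddCommGroup Y] [NormedSpace ℝ Y] [CompleteSpace Y]
    (D : Set X) (hD : IsOpen D) (hconv : Convex ℝ D)
    (F : X → Y) (F' : X → X →L[ℝ] Y) (hF : ∀ x ∈ D, HasFDerivAt F (F' x) x)
    (K : ℝ) (hK : 0 < K)
    (hLip : ∀ x ∈ D, ∀ y ∈ D, ‖F' x - F' y‖ ≤ K * ‖x - y‖)
    (y₀ : X) (hy₀ : y₀ ∈ D)
    (A : Y →L[ℝ] X) (hA1 : ∀ x, A ((F' y₀) x) = x) (hA2 : ∀ y, (F' y₀) (A y) = y)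
    (β η : ℝ) (hβ : 0 < β) (hβA : ‖A‖ ≤ β) (hη : ‖A (F y₀)‖ ≤ η)
    (h : ℝ) (hdef : h = β * K * η) (hhalf : h ≤ 1 / 2)
    (s₀ s₁ : ℝ) (hs₀ : s₀ = (1 - Real.sqrt (1 - 2 * h)) / (β * K))
    (hs₁ : s₁ = (1 + Real.sqrt (1 - 2 * h)) / (β * K))
    (hS : Metric.closedBall y₀ s₀ ⊆ D) :
    ∃ x ∈ Metric.closedBall y₀ s₀, F x = 0 ∧
      ∀ z ∈ D ∩ Metric.ball y₀ s₁, F z = 0 → z = x :=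
  stmt_19_general D hconv F F' hF K hK hLip y₀ hy₀ A hA1 hA2 β η hβ hβA hη h hdef hhalf s₀ s₁ hs₀
    hs₁ hS
end
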